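/- arXiv:1009.1254 — 6 statements merged into one kernel-verified Lean document; each statement's English description precedes it below -/
import Mathlib

section
/- Let v_1, …, v_k be vectors in 𝔽_q^M, let V := span{v_1, …, v_k} with dim V ≥ 1, and let α_1, …, α_k be independent random variables each uniformly distributed on 𝔽_q, with v := Σ_{j=1}^k α_j v_j. Let {b_1, …, b_M} be a basis of 𝔽_q^M such that b_1, …, b_K ∈ V for some 1 ≤ K ≤ M. Then the probability that {v, b_2, …, b_M} is a basis of 𝔽_q^M is at least 1 − 1/q; equivalently, the number of tuples (a_1, …, a_k) ∈ 𝔽_q^k for which {Σ_{j=1}^k a_j v_j, b_2, …, b_M} is a basis of 𝔽_q^M is at least (1 − 1/q) q^k. -/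
/-!
Let `W` be the span of `b_2, …, b_M`, a hyperplane not containing `b_1`. Replacing `b_1` by any
vector outside `W` still gives a basis, so it suffices to count the coefficient tuples `a` with
`∑ a_j v_j ∉ W`. These are the complement of the preimage `S` of `W` under `a ↦ ∑ a_j v_j`, and `S`
is a proper subspace of `𝔽_q^k` because `b_1 ∈ V` has a preimage outside it; a proper subspace
has at most `q^k / q` elements.
-/

section BasisExchange

variable {K V ι : Type*} [DivisionRing K] [AddCommGroup V] [Module K V] [DecidableEq ι]

theorem LinearIndependent.update_of_notMem_span {f : ι → V} (hf : LinearIndependent K f) {i : ι}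
    {c : V} (hc : c ∉ Submodule.span K (f '' {j | j ≠ i})) :
    LinearIndependent K (Function.update f i c) := by
  have hagree : Set.EqOn f (Function.update f i c) {j | j ≠ i} :=
    fun j hj => (Function.update_of_ne hj ..).symm
  have huniv : (Set.univ : Set ι) = insert i {j | j ≠ i} := by ext j; simp [em]
  rw [← linearIndepOn_univ_iff, huniv, linearIndepOn_insert (by simp), ← hagree.image_eq,
    Function.update_self]
  exact ⟨(hf.linearIndepOn _).congr hagree, hc⟩

end BasisExchange

section Counting

variable {K V : Type*} [Field K] [Finite K] [AddCommGroup V] [Module K V] [Finite V]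

theorem Submodule.card_mul_card_le_of_ne_top {S : Submodule K V} (hS : S ≠ ⊤) :
    Nat.card S * Nat.card K ≤ Nat.card V := by
  rw [Module.natCard_eq_pow_finrank (K := K), Module.natCard_eq_pow_finrank (K := K) (V := V),
    ← pow_succ]
  exact Nat.pow_le_pow_right Nat.card_pos (Submodule.finrank_lt hS)

theorem Submodule.one_sub_inv_mul_card_le_card_notMem {S : Submodule K V} (hS : S ≠ ⊤) :
    (1 - 1 / Nat.card K : ℝ) * Nat.card V ≤ Nat.card {x : V // x ∉ S} := by
  have hq : (0 : ℝ) < Nat.card K := by exact_mod_cast Nat.card_pos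
  have hsplit : Nat.card {x : V // x ∉ S} + Nat.card S = Nat.card V :=
    Set.ncard_compl_add_ncard (S : Set V)
  have hS' : (Nat.card S : ℝ) ≤ Nat.card V / Nat.card K := by
    rw [le_div_iff₀ hq]; exact_mod_cast S.card_mul_card_le_of_ne_top hS
  have hsplit' : (Nat.card {x : V // x ∉ S} : ℝ) = Nat.card V - Nat.card S := by
    rw [← hsplit]; push_cast; ring
  rw [hsplit', sub_mul, one_mul, one_div_mul_eq_div]
  linarith

end Counting

theorem stmt_8_general {F : Type*} [Field F] [Fintype F] {M k : ℕ} (hM : 0 < M)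
    (v : Fin k → (Fin M → F))
    (b : Fin M → (Fin M → F))
    (hb : LinearIndependent F b ∧ Submodule.span F (Set.range b) = ⊤)
    (K : ℕ) (hK1 : 1 ≤ K)
    (hbV : ∀ i : Fin M, (i : ℕ) < K → b i ∈ Submodule.span F (Set.range v)) :
    ((1 : ℝ) - 1 / Fintype.card F) * (Fintype.card F : ℝ) ^ k
      ≤ Nat.card {a : Fin k → F //
          LinearIndependent F (Function.update b ⟨0, hM⟩ (∑ j, a j • v j))
          ∧ Submodule.span F
              (Set.range (Function.update b ⟨0, hM⟩ (∑ j, a j • v j))) = ⊤} := by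
  classical
  set i₀ : Fin M := ⟨0, hM⟩
  set W := Submodule.span F (b '' {j | j ≠ i₀})
  set φ := Fintype.linearCombination F v
  have hb₀ : b i₀ ∉ W := hb.1.notMem_span_image (by simp)
  obtain ⟨a₀, ha₀⟩ : b i₀ ∈ LinearMap.range φ := by
    rw [Fintype.range_linearCombination]; exact hbV i₀ hK1
  have hS : W.comap φ ≠ ⊤ := fun h => hb₀ (ha₀ ▸ (h ▸ Submodule.mem_top : a₀ ∈ W.comap φ))
  have hbasis (a : Fin k → F) (ha : a ∉ W.comap φ) :
      LinearIndependent F (Function.update b i₀ (∑ j, a j • v j))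
        ∧ Submodule.span F (Set.range (Function.update b i₀ (∑ j, a j • v j))) = ⊤ := by
    have hli := hb.1.update_of_notMem_span (c := φ a) ha
    rw [Fintype.linearCombination_apply] at hli
    exact ⟨hli, hli.span_eq_top_of_card_eq_finrank' (by simp)⟩
  calc ((1 : ℝ) - 1 / Fintype.card F) * (Fintype.card F : ℝ) ^ k
      = (1 - 1 / Nat.card F) * Nat.card (Fin k → F) := by simp [Nat.card_eq_fintype_card]
    _ ≤ Nat.card {a // a ∉ W.comap φ} := Submodule.one_sub_inv_mul_card_le_card_notMem hS
    _ ≤ _ := by exact_mod_cast Finite.card_le_of_embedding (Subtype.impEmbedding _ _ hbasis)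

/-- With `V = span{v_1,…,v_k}` of dimension at least 1 and a basis
`{b_1,…,b_M}` of `𝔽_q^M` such that `b_1,…,b_K ∈ V` (`1 ≤ K ≤ M`), the number
of coefficient tuples `(a_1,…,a_k) ∈ 𝔽_q^k` for which
`{∑_j a_j v_j, b_2, …, b_M}` is a basis of `𝔽_q^M` is at least `(1 − 1/q) q^k`;
i.e. a uniformly random combination yields a basis with probability ≥ `1 − 1/q`. -/
theorem stmt_8 {F : Type*} [Field F] [Fintype F] {M k : ℕ} (hM : 0 < M)
    (v : Fin k → (Fin M → F))
    (hV : 1 ≤ Module.finrank F (Submodule.span F (Set.range v)))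
    (b : Fin M → (Fin M → F))
    (hb : LinearIndependent F b ∧ Submodule.span F (Set.range b) = ⊤)
    (K : ℕ) (hK1 : 1 ≤ K) (hKM : K ≤ M)
    (hbV : ∀ i : Fin M, (i : ℕ) < K → b i ∈ Submodule.span F (Set.range v)) :
    ((1 : ℝ) - 1 / Fintype.card F) * (Fintype.card F : ℝ) ^ k
      ≤ Nat.card {a : Fin k → F //
          LinearIndependent F (Function.update b ⟨0, hM⟩ (∑ j, a j • v j))
          ∧ Submodule.span F
              (Set.range (Function.update b ⟨0, hM⟩ (∑ j, a j • v j))) = ⊤} :=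
  stmt_8_general hM v b hb K hK1 hbV
end

section
/- Let S be a finite set, let ε_i ∈ [0,1] for each i ∈ S, and let α_1, α_2 be reals with 0 ≤ α_1 < 1 and 0 ≤ α_2 < 1. Then Σ_{H ⊆ S} (−1)^{|H|} (∏_{i∈H} ε_i)^2 / ((1 − α_1 ∏_{i∈H} ε_i)(1 − α_2 ∏_{i∈H} ε_i)) ≥ 0, where the sum ranges over all subsets H of S and the empty product equals 1. -/
/-!
Expanding both geometric factors, `x ^ 2 / ((1 - α₁ x) (1 - α₂ x)) = ∑ α₁ ^ m α₂ ^ n x ^ (m + n + 2)`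
is a power series in `x` with nonnegative coefficients, convergent on `[0, 1]`. Exchanging the
finite sum over `H` with the series, the coefficient of `α₁ ^ m α₂ ^ n` is
`∑_H (-1) ^ |H| ∏_{i ∈ H} ε_i ^ k = ∏_{i ∈ S} (1 - ε_i ^ k) ≥ 0` with `k = m + n + 2`.
-/

open Finset

lemma Finset.prod_one_sub_eq_sum_powerset {ι R : Type*} [CommRing R] (s : Finset ι)
    (f : ι → R) : ∏ i ∈ s, (1 - f i) = ∑ t ∈ s.powerset, (-1) ^ #t * ∏ i ∈ t, f i := by
  classical
  simp [prod_sub]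

theorem sum_powerset_neg_one_pow_mul_nonneg_of_hasSum {ι β : Type*} (S : Finset ι) (ε : ι → ℝ)
    (hε0 : ∀ i ∈ S, 0 ≤ ε i) (hε1 : ∀ i ∈ S, ε i ≤ 1) (f : ℝ → ℝ) (c : β → ℝ) (e : β → ℕ)
    (hc : ∀ b, 0 ≤ c b) (hf : ∀ x ∈ Set.Icc (0 : ℝ) 1, HasSum (fun b => c b * x ^ e b) (f x)) :
    0 ≤ ∑ H ∈ S.powerset, (-1 : ℝ) ^ #H * f (∏ i ∈ H, ε i) := by
  have hmem : ∀ H ∈ S.powerset, ∏ i ∈ H, ε i ∈ Set.Icc (0 : ℝ) 1 := fun H hH =>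
    ⟨prod_nonneg fun i hi => hε0 i (mem_powerset.1 hH hi),
      prod_le_one (fun i hi => hε0 i (mem_powerset.1 hH hi))
        fun i hi => hε1 i (mem_powerset.1 hH hi)⟩
  have hterm : ∀ H ∈ S.powerset, (-1 : ℝ) ^ #H * f (∏ i ∈ H, ε i)
      = ∑' b, (-1 : ℝ) ^ #H * (c b * (∏ i ∈ H, ε i) ^ e b) := fun H hH => by
    rw [tsum_mul_left, (hf _ (hmem H hH)).tsum_eq]
  rw [sum_congr rfl hterm,
    ← Summable.tsum_finsetSum fun H hH => (hf _ (hmem H hH)).summable.mul_left _]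
  refine tsum_nonneg fun b => ?_
  have hcoeff : ∑ H ∈ S.powerset, (-1 : ℝ) ^ #H * (c b * (∏ i ∈ H, ε i) ^ e b)
      = c b * ∏ i ∈ S, (1 - ε i ^ e b) := by
    rw [prod_one_sub_eq_sum_powerset, mul_sum]
    exact sum_congr rfl fun H _ => by rw [prod_pow]; ring
  rw [hcoeff]
  exact mul_nonneg (hc b) <| prod_nonneg fun i hi =>
    sub_nonneg.2 (pow_le_one₀ (hε0 i hi) (hε1 i hi))

lemma hasSum_sq_div_one_sub_mul_one_sub {a b x : ℝ} (ha : 0 ≤ a) (hb : 0 ≤ b) (hx : 0 ≤ x)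
    (hax : a * x < 1) (hbx : b * x < 1) :
    HasSum (fun q : ℕ × ℕ => a ^ q.1 * b ^ q.2 * x ^ (q.1 + q.2 + 2))
      (x ^ 2 / ((1 - a * x) * (1 - b * x))) := by
  have hax0 : 0 ≤ a * x := mul_nonneg ha hx
  have hbx0 : 0 ≤ b * x := mul_nonneg hb hx
  have hA := (hasSum_geometric_of_lt_one hax0 hax).mul_left x
  have hB := (hasSum_geometric_of_lt_one hbx0 hbx).mul_left x
  have hAB := hA.mul hB <| hA.summable.mul_of_nonneg hB.summable
    (fun m => mul_nonneg hx (pow_nonneg hax0 m)) (fun n => mul_nonneg hx (pow_nonneg hbx0 n))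
  have hax1 : 1 - a * x ≠ 0 := by linarith
  have hbx1 : 1 - b * x ≠ 0 := by linarith
  have hterm : ∀ q : ℕ × ℕ, x * (a * x) ^ q.1 * (x * (b * x) ^ q.2)
      = a ^ q.1 * b ^ q.2 * x ^ (q.1 + q.2 + 2) := fun q => by ring
  have hval : x * (1 - a * x)⁻¹ * (x * (1 - b * x)⁻¹) = x ^ 2 / ((1 - a * x) * (1 - b * x)) := by
    field_simp
  simpa only [hterm, hval] using hAB

theorem stmt_10_general {ι : Type*} (S : Finset ι) (ε : ι → ℝ)
    (hε0 : ∀ i ∈ S, 0 ≤ ε i) (hε1 : ∀ i ∈ S, ε i ≤ 1)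
    (α₁ α₂ : ℝ) (hα₁0 : 0 ≤ α₁) (hα₁1 : α₁ < 1) (hα₂0 : 0 ≤ α₂) (hα₂1 : α₂ < 1) :
    0 ≤ ∑ H ∈ S.powerset,
        (-1 : ℝ) ^ H.card * (∏ i ∈ H, ε i) ^ 2
          / ((1 - α₁ * ∏ i ∈ H, ε i) * (1 - α₂ * ∏ i ∈ H, ε i)) := by
  simp_rw [mul_div_assoc]
  exact sum_powerset_neg_one_pow_mul_nonneg_of_hasSum S ε hε0 hε1
    (fun x => x ^ 2 / ((1 - α₁ * x) * (1 - α₂ * x)))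
    (fun q : ℕ × ℕ => α₁ ^ q.1 * α₂ ^ q.2) (fun q => q.1 + q.2 + 2)
    (fun q => mul_nonneg (pow_nonneg hα₁0 _) (pow_nonneg hα₂0 _))
    fun x hx => hasSum_sq_div_one_sub_mul_one_sub hα₁0 hα₂0 hx.1
      ((mul_le_of_le_one_right hα₁0 hx.2).trans_lt hα₁1)
      ((mul_le_of_le_one_right hα₂0 hx.2).trans_lt hα₂1)

/-- Non-negativity of the alternating sum
`∑_{H ⊆ S} (−1)^{|H|} (∏_{i∈H} ε_i)^2 / ((1 − α₁ ∏_{i∈H} ε_i)(1 − α₂ ∏_{i∈H} ε_i))`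
for `ε_i ∈ [0,1]` and `0 ≤ α₁, α₂ < 1`. -/
theorem stmt_10 {ι : Type*} [DecidableEq ι] (S : Finset ι) (ε : ι → ℝ)
    (hε0 : ∀ i ∈ S, 0 ≤ ε i) (hε1 : ∀ i ∈ S, ε i ≤ 1)
    (α₁ α₂ : ℝ) (hα₁0 : 0 ≤ α₁) (hα₁1 : α₁ < 1) (hα₂0 : 0 ≤ α₂) (hα₂1 : α₂ < 1) :
    0 ≤ ∑ H ∈ S.powerset,
        (-1 : ℝ) ^ H.card * (∏ i ∈ H, ε i) ^ 2
          / ((1 - α₁ * ∏ i ∈ H, ε i) * (1 - α₂ * ∏ i ∈ H, ε i)) :=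
  stmt_10_general S ε hε0 hε1 α₁ α₂ hα₁0 hα₁1 hα₂0 hα₂1
end

section
/- Fix i ∈ 𝒩 and suppose the numbers g^i_S, defined for all subsets S ⊆ 𝒩 with i ∈ S, satisfy the initial condition g^i_{{i}} = 1/(1 − ε_𝒩) and the recursion g^i_S = (1/(1 − ε_{𝒩∖(S∖{i})})) · Σ_{I : {i} ⊆ I ⊊ S} g^i_I · p_{𝒩∖(S∖{i}), S∖I} for every S with i ∈ S and |S| ≥ 2, where p_{S,G} := Σ_{H ⊆ G} (−1)^{|H|} ε_{S∪H}. Then for every S ⊆ 𝒩 with i ∈ S, g^i_S = f^i_S = Σ_{H ⊆ S∖{i}} (−1)^{|H|} / (1 − ε_{(𝒩∖(S∖{i})) ∪ H}). -/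
open Finset

/-- The explicit formula `f^i_S := ∑_{H ⊆ S∖{i}} (−1)^{|H|} / (1 − ε_{(𝒩∖(S∖{i}))∪H})`. -/
noncomputable def fcoef {N : Type*} [Fintype N] [DecidableEq N]
    (ε : Finset N → ℝ) (i : N) (S : Finset N) : ℝ :=
  ∑ H ∈ (S.erase i).powerset, (-1 : ℝ) ^ H.card / (1 - ε ((S.erase i)ᶜ ∪ H))

/-- The quantity `p_{S,G} := ∑_{H ⊆ G} (−1)^{|H|} ε_{S∪H}`. -/
noncomputable def pcoef {N : Type*} [Fintype N] [DecidableEq N]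
    (ε : Finset N → ℝ) (S G : Finset N) : ℝ :=
  ∑ H ∈ G.powerset, (-1 : ℝ) ^ H.card * ε (S ∪ H)

/-!
Write `T = S ∖ {i}`, `A = 𝒩 ∖ T` and substitute `D = S ∖ I` in the recursion. Each
`f^i_{S∖D}` is the alternating sum of `1 / (1 − ε_{A∪M})` over `D ⊆ M ⊆ T`, so after exchanging
the sums the coefficient of `1 / (1 − ε_{A∪M})` is `∑_{D ⊆ M} (−1)^{|M∖D|} p_{A,D}`, which by
Möbius inversion on the Boolean lattice is `(−1)^{|M|} ε_{A∪M}`. As `ε / (1 − ε) = 1 / (1 − ε) − 1`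
and `∑_{M ⊆ T} (−1)^{|M|} = 0` for `T ≠ ∅`, the sum over all `D ⊆ T` is `f^i_S`; dropping the term
`D = ∅`, which is `f^i_S ε_A`, shows that `f^i` satisfies the recursion, and strong induction on
`S` gives `g^i = f^i`.
-/

namespace Finset

variable {α R : Type*} [DecidableEq α] [Ring R]

theorem sum_powerset_neg_one_pow_card' {s : Finset α} :
    ∑ t ∈ s.powerset, (-1 : R) ^ #t = if s = ∅ then 1 else 0 := by
  simpa using congrArg (Int.cast : ℤ → R) (sum_powerset_neg_one_pow_card (x := s))

theorem sum_Icc_neg_one_pow_card_sdiff {H M : Finset α} (hHM : H ⊆ M) :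
    ∑ D ∈ Icc H M, (-1 : R) ^ #(M \ D) = if H = M then 1 else 0 := by
  have hreflect :
      ∑ D ∈ Icc H M, (-1 : R) ^ #(M \ D) = ∑ E ∈ (M \ H).powerset, (-1 : R) ^ #E := by
    refine sum_nbij' (M \ ·) (M \ ·) ?_ ?_ ?_ ?_ fun _ _ => rfl
    · intro D hD
      simp only [mem_Icc, mem_powerset] at hD ⊢
      exact sdiff_subset_sdiff subset_rfl hD.1
    · intro E hE
      rw [mem_powerset] at hE
      exact mem_Icc.2 ⟨subset_sdiff.2 ⟨hHM, disjoint_sdiff.mono_right hE⟩, sdiff_subset⟩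
    · intro D hD
      exact sdiff_sdiff_eq_self (mem_Icc.1 hD).2
    · intro E hE
      exact sdiff_sdiff_eq_self ((mem_powerset.1 hE).trans sdiff_subset)
  rw [hreflect, sum_powerset_neg_one_pow_card']
  exact if_congr (sdiff_eq_empty_iff_subset.trans ⟨hHM.antisymm, fun h => h ▸ subset_rfl⟩)
    rfl rfl

theorem moebius_inversion_powerset (ψ : Finset α → R) (M : Finset α) :
    ∑ D ∈ M.powerset, (-1 : R) ^ #(M \ D) * ∑ H ∈ D.powerset, ψ H = ψ M := calc
  _ = ∑ D ∈ M.powerset, ∑ H ∈ D.powerset, (-1 : R) ^ #(M \ D) * ψ H := by simp_rw [mul_sum]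
  _ = ∑ H ∈ M.powerset, ∑ D ∈ Icc H M, (-1 : R) ^ #(M \ D) * ψ H :=
    sum_comm' fun D H => by
      simp only [mem_powerset, mem_Icc]
      exact ⟨fun h => ⟨⟨h.2, h.1⟩, h.2.trans h.1⟩, fun h => ⟨h.1.2, h.1.1⟩⟩
  _ = ∑ H ∈ M.powerset, (if H = M then 1 else 0) * ψ H :=
    sum_congr rfl fun H hH => by
      rw [← sum_mul, sum_Icc_neg_one_pow_card_sdiff (mem_powerset.1 hH)]
  _ = ψ M := by simp

theorem sum_filter_mem_powerset_eq_sum_powerset_erase {β : Type*} [AddCommMonoid β]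
    (f : Finset α → Finset α → β) {a : α} {s : Finset α} (ha : a ∈ s) :
    ∑ t ∈ s.powerset.filter (a ∈ ·), f t (s \ t) =
      ∑ u ∈ (s.erase a).powerset, f (s \ u) u := by
  refine sum_nbij' (s \ ·) (s \ ·) ?_ ?_ ?_ ?_ ?_
  · intro t ht
    simp only [mem_filter, mem_powerset] at ht ⊢
    grind
  · intro u hu
    simp only [mem_filter, mem_powerset] at hu ⊢
    grind
  · intro t ht
    exact sdiff_sdiff_eq_self (mem_powerset.1 (mem_filter.1 ht).1)
  · intro u hu
    exact sdiff_sdiff_eq_self ((mem_powerset.1 hu).trans (erase_subset a s))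
  · intro t ht
    rw [sdiff_sdiff_eq_self (mem_powerset.1 (mem_filter.1 ht).1)]

end Finset

section Coefficients

variable {N : Type*} [Fintype N] [DecidableEq N] (ε : Finset N → ℝ) (i : N)

theorem fcoef_singleton : fcoef ε i {i} = 1 / (1 - ε univ) := by
  simp [fcoef]

theorem pcoef_empty (A : Finset N) : pcoef ε A ∅ = ε A := by
  simp [pcoef]

theorem fcoef_sdiff {S D : Finset N} (hD : D ⊆ S.erase i) :
    fcoef ε i (S \ D) =
      ∑ M ∈ Icc D (S.erase i), (-1 : ℝ) ^ #(M \ D) / (1 - ε ((S.erase i)ᶜ ∪ M)) := by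
  rw [fcoef, ← erase_sdiff_comm]
  refine sum_nbij' (D ∪ ·) (· \ D) ?_ ?_ ?_ ?_ ?_
  · intro K hK
    simp only [mem_powerset, mem_Icc] at hK ⊢
    grind
  · intro M hM
    simp only [mem_powerset, mem_Icc] at hM ⊢
    grind
  · intro K hK
    exact union_sdiff_cancel_left (disjoint_sdiff.mono_right (mem_powerset.1 hK))
  · intro M hM
    exact union_sdiff_of_subset (mem_Icc.1 hM).1
  · intro K hK
    rw [union_sdiff_cancel_left (disjoint_sdiff.mono_right (mem_powerset.1 hK))]
    congr 3
    ext x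
    simp only [mem_union, mem_compl, mem_sdiff]
    tauto

theorem sum_powerset_fcoef_sdiff_mul_pcoef (hε : ∀ I, ε I ≠ 1) {S : Finset N}
    (hS : (S.erase i).Nonempty) :
    ∑ D ∈ (S.erase i).powerset, fcoef ε i (S \ D) * pcoef ε (S.erase i)ᶜ D =
      fcoef ε i S := by
  set T := S.erase i
  set A := Tᶜ
  calc
    _ = ∑ D ∈ T.powerset, ∑ M ∈ Icc D T,
          (-1 : ℝ) ^ #(M \ D) / (1 - ε (A ∪ M)) * pcoef ε A D :=
      sum_congr rfl fun D hD => by rw [fcoef_sdiff ε i (mem_powerset.1 hD), sum_mul]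
    _ = ∑ M ∈ T.powerset, ∑ D ∈ M.powerset,
          (-1 : ℝ) ^ #(M \ D) / (1 - ε (A ∪ M)) * pcoef ε A D :=
      sum_comm' fun D M => by
        simp only [mem_powerset, mem_Icc]
        exact ⟨fun h => ⟨h.2.1, h.2.2⟩, fun h => ⟨h.1.trans h.2, h.1, h.2⟩⟩
    _ = ∑ M ∈ T.powerset, (1 - ε (A ∪ M))⁻¹ * ((-1) ^ #M * ε (A ∪ M)) :=
      sum_congr rfl fun M _ => by
        rw [← moebius_inversion_powerset (fun H => (-1) ^ #H * ε (A ∪ H)) M, mul_sum]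
        refine sum_congr rfl fun D _ => ?_
        rw [pcoef]
        ring
    _ = ∑ M ∈ T.powerset, ((-1 : ℝ) ^ #M / (1 - ε (A ∪ M)) - (-1) ^ #M) :=
      sum_congr rfl fun M _ => by
        have : 1 - ε (A ∪ M) ≠ 0 := sub_ne_zero.2 (hε _).symm
        field_simp
        ring
    _ = fcoef ε i S := by
      rw [sum_sub_distrib, sum_powerset_neg_one_pow_card', if_neg hS.ne_empty, sub_zero,
        fcoef]

theorem sum_fcoef_mul_pcoef (hε : ∀ I, ε I ≠ 1) {S : Finset N} (hi : i ∈ S)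
    (hS : 2 ≤ #S) :
    ∑ I ∈ S.powerset.filter (fun I => i ∈ I ∧ I ≠ S),
        fcoef ε i I * pcoef ε (S.erase i)ᶜ (S \ I) =
      (1 - ε (S.erase i)ᶜ) * fcoef ε i S := by
  have hT : (S.erase i).Nonempty := by
    rw [← card_pos, card_erase_of_mem hi]
    omega
  have hproper : S.powerset.filter (fun I => i ∈ I ∧ I ≠ S) =
      (S.powerset.filter (i ∈ ·)).erase S := by
    ext I
    simp only [mem_filter, mem_erase]
    tauto
  have hS_mem : S ∈ S.powerset.filter (i ∈ ·) := mem_filter.2 ⟨mem_powerset_self S, hi⟩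
  rw [hproper, sum_erase_eq_sub hS_mem,
    sum_filter_mem_powerset_eq_sum_powerset_erase
      (fun I D => fcoef ε i I * pcoef ε (S.erase i)ᶜ D) hi,
    sum_powerset_fcoef_sdiff_mul_pcoef ε i hε hT, Finset.sdiff_self, pcoef_empty]
  ring

end Coefficients

/-- If the numbers `g^i_S` satisfy the initial condition `g^i_{{i}} = 1/(1 − ε_𝒩)`
and the recursion
`g^i_S = (1/(1 − ε_{𝒩∖(S∖{i})})) · ∑_{ {i} ⊆ I ⊊ S } g^i_I · p_{𝒩∖(S∖{i}), S∖I}`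
for every `S ∋ i` with `|S| ≥ 2`, then `g^i_S = f^i_S` for every `S ∋ i`. -/
theorem stmt_11 {N : Type*} [Fintype N] [DecidableEq N]
    (ε : Finset N → ℝ) (hε : ∀ I, ε I ≠ 1)
    (i : N) (g : Finset N → ℝ)
    (hinit : g {i} = 1 / (1 - ε Finset.univ))
    (hrec : ∀ S : Finset N, i ∈ S → 2 ≤ S.card →
      g S = (1 / (1 - ε (S.erase i)ᶜ)) *
        ∑ I ∈ S.powerset.filter (fun I => i ∈ I ∧ I ≠ S),
          g I * pcoef ε (S.erase i)ᶜ (S \ I)) :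
    ∀ S : Finset N, i ∈ S → g S = fcoef ε i S := by
  intro S
  induction S using Finset.strongInduction with
  | H S ih =>
    intro hi
    obtain hS | hS := (Nat.one_le_iff_ne_zero.2 (card_ne_zero_of_mem hi)).eq_or_lt
    · rw [eq_singleton_iff_unique_mem.2 ⟨hi, fun j hj => card_le_one.1 hS.ge j hj i hi⟩, hinit,
        fcoef_singleton]
    · have hind : ∀ I ∈ S.powerset.filter (fun I => i ∈ I ∧ I ≠ S),
          g I = fcoef ε i I := fun I hI => by
          obtain ⟨hIS, hiI, hne⟩ := by simpa only [mem_filter, mem_powerset] using hI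
          exact ih I (Finset.ssubset_iff_subset_ne.2 ⟨hIS, hne⟩) hiI
      rw [hrec S hi hS, sum_congr rfl fun I hI => by rw [hind I hI],
        sum_fcoef_mul_pcoef ε i hε hi hS, one_div,
        inv_mul_cancel_left₀ (sub_ne_zero.2 (hε _).symm)]
end

section
/- For every subset S ⊆ 𝒩 and every i ∈ S, Σ_{I : i ∈ I ⊆ S} f^i_I = 1/(1 − ε_{𝒩∖(S∖{i})}), where the sum ranges over all subsets I of S containing i. -/
/-!
Writing `J = I ∖ {i}` and `g K = 1 / (1 - ε_{𝒩∖K})`, the coefficient `f^i_I` is the Möbius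
transform `∑_{H ⊆ J} (-1)^{|H|} g (J ∖ H)` of `g` on the Boolean lattice of subsets of `S ∖ {i}`,
so the sum over `J ⊆ S ∖ {i}` is Möbius inversion and returns `g (S ∖ {i})`.
-/

open Finset

namespace Finset

variable {α M : Type*} [DecidableEq α]

theorem sum_filter_mem_powerset [AddCommMonoid M] {s : Finset α} {a : α} (ha : a ∈ s)
    (f : Finset α → M) :
    ∑ t ∈ s.powerset with a ∈ t, f t = ∑ t ∈ (s.erase a).powerset, f (insert a t) := by
  obtain ⟨s, has, rfl⟩ : ∃ s', a ∉ s' ∧ s = insert a s' :=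
    ⟨s.erase a, notMem_erase a s, (insert_erase ha).symm⟩
  rw [sum_filter, sum_powerset_insert has, erase_insert has]
  have hnot : ∀ t ∈ s.powerset, a ∉ t := fun t ht h => has (mem_powerset.1 ht h)
  simp +contextual [hnot]

theorem sum_powerset_sum_powerset_neg_one_pow_smul_sdiff [AddCommGroup M]
    (g : Finset α → M) (T : Finset α) :
    ∑ J ∈ T.powerset, ∑ H ∈ J.powerset, (-1 : ℤ) ^ #H • g (J \ H) = g T := by
  induction T using Finset.induction_on generalizing g with
  | empty => simp
  | insert a T ha ih =>
    -- Split by whether `a ∈ H`: the new sets `insert a J` contribute the transform of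
    -- `g ∘ insert a` minus that of `g`.
    have split : ∀ J ∈ T.powerset,
        ∑ H ∈ (insert a J).powerset, (-1 : ℤ) ^ #H • g (insert a J \ H)
          = ∑ H ∈ J.powerset, (-1 : ℤ) ^ #H • g (insert a (J \ H))
            - ∑ H ∈ J.powerset, (-1 : ℤ) ^ #H • g (J \ H) := by
      intro J hJ
      have haJ : a ∉ J := fun h => ha (mem_powerset.1 hJ h)
      rw [sum_powerset_insert haJ, sub_eq_add_neg, ← sum_neg_distrib]
      congr 1 <;> refine sum_congr rfl fun H hH => ?_
      · have haH : a ∉ H := fun h => haJ (mem_powerset.1 hH h)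
        rw [insert_sdiff_of_notMem _ haH]
      · have haH : a ∉ H := fun h => haJ (mem_powerset.1 hH h)
        rw [card_insert_of_notMem haH, insert_sdiff_insert, sdiff_insert_of_notMem haJ,
          pow_succ, mul_neg_one, neg_smul]
    rw [sum_powerset_insert ha, sum_congr rfl split, sum_sub_distrib,
      ih (fun K => g (insert a K)), ih g, add_sub_cancel]

end Finset

theorem fcoef_insert {N : Type*} [Fintype N] [DecidableEq N] (ε : Finset N → ℝ) {i : N}
    {J : Finset N} (hiJ : i ∉ J) :
    fcoef ε i (insert i J) = ∑ H ∈ J.powerset, (-1 : ℤ) ^ #H • (1 / (1 - ε (J \ H)ᶜ)) := by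
  rw [fcoef, erase_insert hiJ]
  refine sum_congr rfl fun H _ => ?_
  rw [compl_sdiff, himp_eq, sup_eq_union, union_comm, zsmul_eq_mul, div_eq_mul_one_div]
  push_cast
  ring

theorem stmt_12_general {N : Type*} [Fintype N] [DecidableEq N]
    (ε : Finset N → ℝ)
    (S : Finset N) (i : N) (hi : i ∈ S) :
    ∑ I ∈ S.powerset.filter (fun I => i ∈ I), fcoef ε i I
      = 1 / (1 - ε (S.erase i)ᶜ) := by
  rw [sum_filter_mem_powerset hi,
    sum_congr rfl fun J hJ => fcoef_insert ε fun h => notMem_erase i S (mem_powerset.1 hJ h)]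
  exact sum_powerset_sum_powerset_neg_one_pow_smul_sdiff (fun K => 1 / (1 - ε Kᶜ)) _

/-- For every subset `S ⊆ 𝒩` and every `i ∈ S`,
`∑_{I : i ∈ I ⊆ S} f^i_I = 1/(1 − ε_{𝒩∖(S∖{i})})`. -/
theorem stmt_12 {N : Type*} [Fintype N] [DecidableEq N]
    (ε : Finset N → ℝ) (hε : ∀ I, ε I ≠ 1)
    (S : Finset N) (i : N) (hi : i ∈ S) :
    ∑ I ∈ S.powerset.filter (fun I => i ∈ I), fcoef ε i I
      = 1 / (1 - ε (S.erase i)ᶜ) :=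
  stmt_12_general ε S i hi
end

section
/- Suppose the channel is symmetric, i.e., there exist real numbers ε̃_0, …, ε̃_N with ε̃_k ≠ 1 for all k such that ε_I = ε̃_{|I|} for every subset I ⊆ 𝒩. Then for every subset S ⊆ 𝒩 and every i ∈ S, f^i_S = Σ_{m=0}^{|S|−1} C(|S|−1, m) (−1)^{|S|−1−m} / (1 − ε̃_{N−m}), where C(·,·) denotes the binomial coefficient; in particular, f^i_S does not depend on the choice of i ∈ S. -/
open Finset

/-! For a symmetric `ε`, each term of `f^i_S` depends on `H` only through `|H|`,
so grouping the subsets `H ⊆ S ∖ {i}` by cardinality turns the sum into a binomial sum, which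
the substitution `m = |S| - 1 - |H|` puts into the stated form. -/

theorem Finset.card_compl_union_of_subset {α : Type*} [Fintype α] [DecidableEq α]
    {H T : Finset α} (hHT : H ⊆ T) : (Tᶜ ∪ H).card = Fintype.card α - (T.card - H.card) := by
  rw [← card_sdiff_of_subset hHT, ← card_compl, compl_sdiff, himp_eq, sup_comm, sup_eq_union]

theorem Finset.sum_range_choose_neg_one_pow_div_reflect {K : Type*} [Field K]
    (p : ℕ) (f : ℕ → K) :
    ∑ k ∈ range (p + 1), (p.choose k : K) * (-1) ^ k / f (p - k) =
      ∑ m ∈ range (p + 1), (p.choose m : K) * (-1) ^ (p - m) / f m := by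
  rw [← sum_range_reflect _ (p + 1)]
  refine sum_congr rfl fun m hm => ?_
  have hmp : m ≤ p := Nat.lt_succ_iff.mp (mem_range.mp hm)
  rw [Nat.add_sub_cancel, Nat.sub_sub_self hmp, Nat.choose_symm hmp]

section Symmetric

variable {N : Type*} [Fintype N] [DecidableEq N] {ε : Finset N → ℝ} {εt : ℕ → ℝ}

theorem fcoef_eq_sum_powerset_of_card (hsym : ∀ I : Finset N, ε I = εt I.card) (i : N)
    (S : Finset N) :
    fcoef ε i S = ∑ H ∈ (S.erase i).powerset,
      (-1 : ℝ) ^ H.card / (1 - εt (Fintype.card N - ((S.erase i).card - H.card))) := by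
  refine sum_congr rfl fun H hH => ?_
  rw [hsym, card_compl_union_of_subset (mem_powerset.mp hH)]

theorem fcoef_eq_sum_range_of_card (hsym : ∀ I : Finset N, ε I = εt I.card) {S : Finset N}
    {i : N} (hi : i ∈ S) :
    fcoef ε i S = ∑ m ∈ range S.card,
      ((S.card - 1).choose m : ℝ) * (-1 : ℝ) ^ (S.card - 1 - m)
        / (1 - εt (Fintype.card N - m)) := by
  have hS : S.card = (S.erase i).card + 1 := (card_erase_add_one hi).symm
  rw [fcoef_eq_sum_powerset_of_card hsym, sum_powerset_apply_card
    (fun k => (-1 : ℝ) ^ k / (1 - εt (Fintype.card N - ((S.erase i).card - k)))), hS,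
    Nat.add_sub_cancel, ← sum_range_choose_neg_one_pow_div_reflect]
  simp only [nsmul_eq_mul, mul_div_assoc]

end Symmetric

theorem stmt_14_general {N : Type*} [Fintype N] [DecidableEq N]
    (ε : Finset N → ℝ) (εt : ℕ → ℝ)
    (hsym : ∀ I : Finset N, ε I = εt I.card) :
    ∀ S : Finset N, ∀ i ∈ S,
      (fcoef ε i S = ∑ m ∈ Finset.range S.card,
          ((S.card - 1).choose m : ℝ) * (-1 : ℝ) ^ (S.card - 1 - m)
            / (1 - εt (Fintype.card N - m)))
      ∧ ∀ j ∈ S, fcoef ε i S = fcoef ε j S := by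
  intro S i hi
  refine ⟨fcoef_eq_sum_range_of_card hsym hi, fun j hj => ?_⟩
  rw [fcoef_eq_sum_range_of_card hsym hi, fcoef_eq_sum_range_of_card hsym hj]

/-- For a symmetric channel (`ε_I = ε̃_{|I|}`),
`f^i_S = ∑_{m=0}^{|S|−1} C(|S|−1, m) (−1)^{|S|−1−m} / (1 − ε̃_{N−m})`;
in particular `f^i_S` does not depend on the choice of `i ∈ S`. -/
theorem stmt_14 {N : Type*} [Fintype N] [DecidableEq N]
    (ε : Finset N → ℝ) (εt : ℕ → ℝ) (hεt : ∀ k, εt k ≠ 1)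
    (hsym : ∀ I : Finset N, ε I = εt I.card) :
    ∀ S : Finset N, ∀ i ∈ S,
      (fcoef ε i S = ∑ m ∈ Finset.range S.card,
          ((S.card - 1).choose m : ℝ) * (-1 : ℝ) ^ (S.card - 1 - m)
            / (1 - εt (Fintype.card N - m)))
      ∧ ∀ j ∈ S, fcoef ε i S = fcoef ε j S :=
  stmt_14_general ε εt hsym
end

section
/- Suppose the channel is spatially independent: for each j ∈ 𝒩 a real number ε_j ∈ [0,1) is given and ε_I := ∏_{j∈I} ε_j for every subset I ⊆ 𝒩 (so every subset appearing in the denominators of f contains an element of 𝒩, making those denominators positive). Then for every subset S ⊆ 𝒩 and all i, m ∈ S with ε_m ≥ ε_i, it holds that ε_i f^m_S ≥ ε_m f^i_S. -/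
open Finset

/-!
Expanding each `1 / (1 - a ∏_{j ∈ H} ε_j)` as a geometric series and summing over `H` first
turns `f^i_S` into `∑_k (ε_i c)^k ∏_{j ∈ S ∖ {i}} (1 - ε_j^k)`, where `c = ∏_{j ∉ S} ε_j`.
After the common factor `c^k ∏_{j ∈ S ∖ {i, m}} (1 - ε_j^k) ≥ 0` is pulled out, the claim
compares the series term by term, which is the elementary inequality
`y x^k (1 - y^k) ≤ x y^k (1 - x^k)` for `0 ≤ x ≤ y`.
-/

lemma prod_one_sub_pow_eq_sum_powerset {ι : Type*} [DecidableEq ι]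
    (T : Finset ι) (ε : ι → ℝ) (k : ℕ) :
    ∏ j ∈ T, (1 - ε j ^ k) = ∑ H ∈ T.powerset, (-1) ^ #H * (∏ j ∈ H, ε j) ^ k := by
  simp [prod_sub, prod_pow]

lemma hasSum_pow_mul_prod_one_sub_pow {ι : Type*} [DecidableEq ι]
    (T : Finset ι) {ε : ι → ℝ} (h0 : ∀ j, 0 ≤ ε j) (h1 : ∀ j, ε j ≤ 1)
    {a : ℝ} (ha0 : 0 ≤ a) (ha1 : a < 1) :
    HasSum (fun k : ℕ => a ^ k * ∏ j ∈ T, (1 - ε j ^ k))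
      (∑ H ∈ T.powerset, (-1) ^ #H / (1 - a * ∏ j ∈ H, ε j)) := by
  have hgeom (H : Finset ι) : HasSum (fun k : ℕ => (-1) ^ #H * (a * ∏ j ∈ H, ε j) ^ k)
      ((-1) ^ #H / (1 - a * ∏ j ∈ H, ε j)) := by
    have hprod0 : 0 ≤ ∏ j ∈ H, ε j := prod_nonneg fun j _ => h0 j
    have hprod1 : ∏ j ∈ H, ε j ≤ 1 := prod_le_one (fun j _ => h0 j) fun j _ => h1 j
    refine (hasSum_geometric_of_lt_one (mul_nonneg ha0 hprod0) ?_).mul_left _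
    exact (mul_le_of_le_one_right ha0 hprod1).trans_lt ha1
  convert hasSum_sum fun H _ => hgeom H using 1
  ext k
  simp only [prod_one_sub_pow_eq_sum_powerset, mul_sum, mul_pow]
  exact sum_congr rfl fun H _ => by ring

lemma prod_lt_one_of_mem {ι : Type*} {T : Finset ι} {ε : ι → ℝ}
    (h0 : ∀ j, 0 ≤ ε j) (h1 : ∀ j, ε j < 1) {i : ι} (hi : i ∈ T) :
    ∏ j ∈ T, ε j < 1 := by
  classical
  rw [← mul_prod_erase T ε hi]
  exact (mul_le_of_le_one_right (h0 i)
    (prod_le_one (fun j _ => h0 j) fun j _ => (h1 j).le)).trans_lt (h1 i)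

lemma hasSum_fcoef_prod {N : Type*} [Fintype N] [DecidableEq N]
    {ε : N → ℝ} (h0 : ∀ j, 0 ≤ ε j) (h1 : ∀ j, ε j < 1) (i : N) (S : Finset N) :
    HasSum (fun k : ℕ => (∏ j ∈ (S.erase i)ᶜ, ε j) ^ k * ∏ j ∈ S.erase i, (1 - ε j ^ k))
      (fcoef (fun I => ∏ j ∈ I, ε j) i S) := by
  convert hasSum_pow_mul_prod_one_sub_pow (S.erase i) h0 (fun j => (h1 j).le)
    (prod_nonneg fun j _ => h0 j) (prod_lt_one_of_mem h0 h1 (by simp : i ∈ (S.erase i)ᶜ)) using 1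
  refine sum_congr rfl fun H hH => ?_
  dsimp only
  rw [prod_union (disjoint_compl_left.mono_right (mem_powerset.1 hH))]

lemma mul_pow_mul_one_sub_pow_le {x y : ℝ} (hx : 0 ≤ x) (hxy : x ≤ y) (k : ℕ) :
    y * x ^ k * (1 - y ^ k) ≤ x * y ^ k * (1 - x ^ k) := by
  rcases k with _ | n
  · simp
  have hy : 0 ≤ y := hx.trans hxy
  have hpow : x ^ n ≤ y ^ n := pow_le_pow_left₀ hx hxy n
  have hxy_pow : 0 ≤ x ^ (n + 1) * y ^ (n + 1) := by positivity
  calc y * x ^ (n + 1) * (1 - y ^ (n + 1))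
      = x * y * x ^ n - x ^ (n + 1) * y ^ (n + 1) * y := by ring
    _ ≤ x * y * y ^ n - x ^ (n + 1) * y ^ (n + 1) * x := by gcongr
    _ = x * y ^ (n + 1) * (1 - x ^ (n + 1)) := by ring

/-- For a spatially independent channel (`ε_I = ∏_{j∈I} ε_j` with `ε_j ∈ [0,1)`),
for every `S ⊆ 𝒩` and all `i, m ∈ S` with `ε_m ≥ ε_i`, it holds
`ε_i f^m_S ≥ ε_m f^i_S`. -/
theorem stmt_15 {N : Type*} [Fintype N] [DecidableEq N]
    (εi : N → ℝ) (h0 : ∀ j, 0 ≤ εi j) (h1 : ∀ j, εi j < 1)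
    (S : Finset N) (i m : N) (hi : i ∈ S) (hm : m ∈ S) (hcmp : εi i ≤ εi m) :
    εi m * fcoef (fun I => ∏ j ∈ I, εi j) i S
      ≤ εi i * fcoef (fun I => ∏ j ∈ I, εi j) m S := by
  rcases eq_or_ne i m with rfl | hne
  · exact le_rfl
  refine hasSum_le (fun k => ?_) ((hasSum_fcoef_prod h0 h1 i S).mul_left _)
    ((hasSum_fcoef_prod h0 h1 m S).mul_left _)
  set Q := ∏ j ∈ (S.erase i).erase m, (1 - εi j ^ k)
  have hQ : 0 ≤ Q := prod_nonneg fun j _ => sub_nonneg.2 (pow_le_one₀ (h0 j) (h1 j).le)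
  have hc : 0 ≤ (∏ j ∈ Sᶜ, εi j) ^ k := pow_nonneg (prod_nonneg fun j _ => h0 j) k
  have hPi : ∏ j ∈ S.erase i, (1 - εi j ^ k) = (1 - εi m ^ k) * Q :=
    (mul_prod_erase _ _ (mem_erase.2 ⟨hne.symm, hm⟩)).symm
  have hPm : ∏ j ∈ S.erase m, (1 - εi j ^ k) = (1 - εi i ^ k) * Q := by
    rw [← mul_prod_erase _ _ (mem_erase.2 ⟨hne, hi⟩), erase_right_comm]
  simp only [compl_erase, prod_insert (notMem_compl.2 hi), prod_insert (notMem_compl.2 hm),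
    hPi, hPm, mul_pow]
  have key := mul_le_mul_of_nonneg_right (mul_pow_mul_one_sub_pow_le (h0 i) hcmp k)
    (mul_nonneg hc hQ)
  linarith
end
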